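/- Let Θ = V̄×Ā. There exist two IRL problems τ = (M, π^E) and τ̂ = (M̂, π̂^E) on a common finite state space with |S| ≥ 2, common action space, and common horizon H ≥ 2, such that D^L(τ, τ̂) = 0 but D^all_Θ(R^τ, R^τ̂) ≥ 1, where R^τ and R^τ̂ are the ground-truth reward mappings induced by τ and τ̂ respectively. -/

import Mathlib

open Finset
open scoped Classical ENNReal NNReal

namespace IRL

/-- `P` is a valid transition kernel: each `P h s a` is a probability
distribution over next states. -/
def IsKernel {S A : Type*} [Fintype S] (P : ℕ → S → A → S → ℝ) : Prop :=
  ∀ h s a, (∀ s', 0 ≤ P h s a s') ∧ ∑ s', P h s a s' = 1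

/-- `π` is a valid (Markov, time-dependent, randomized) policy. -/
def IsPolicy {S A : Type*} [Fintype A] (π : ℕ → S → A → ℝ) : Prop :=
  ∀ h s, (∀ a, 0 ≤ π h s a) ∧ ∑ a, π h s a = 1

/-- Value function `V^π_h(s; r)` (steps are 0-based, horizon `H`). -/
noncomputable def Vval {S A : Type*} [Fintype S] [Fintype A] (H : ℕ)
    (P : ℕ → S → A → S → ℝ) (π : ℕ → S → A → ℝ) (r : ℕ → S → A → ℝ)
    (h : ℕ) (s : S) : ℝ :=
  if hlt : h < H then
    ∑ a, π h s a * (r h s a + ∑ s', P h s a s' * Vval H P π r (h + 1) s')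
  else 0
termination_by H - h
decreasing_by omega

/-- Q-function `Q^π_h(s, a; r)`. -/
noncomputable def Qval {S A : Type*} [Fintype S] [Fintype A] (H : ℕ)
    (P : ℕ → S → A → S → ℝ) (π : ℕ → S → A → ℝ) (r : ℕ → S → A → ℝ)
    (h : ℕ) (s : S) (a : A) : ℝ :=
  if h < H then r h s a + ∑ s', P h s a s' * Vval H P π r (h + 1) s' else 0

/-- `π` is an optimal policy of the MDP `M ∪ r`: its advantage function is
nonpositive at every `(h, s, a)`. -/
def IsOptimal {S A : Type*} [Fintype S] [Fintype A] (H : ℕ)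
    (P : ℕ → S → A → S → ℝ) (r : ℕ → S → A → ℝ) (π : ℕ → S → A → ℝ) : Prop :=
  ∀ h, h < H → ∀ s a, Qval H P π r h s a ≤ Vval H P π r h s

/-- `r` is a feasible reward for the IRL problem `(M, πE)`. -/
def Feasible {S A : Type*} [Fintype S] [Fintype A] (H : ℕ)
    (P : ℕ → S → A → S → ℝ) (πE : ℕ → S → A → ℝ) (r : ℕ → S → A → ℝ) : Prop :=
  IsOptimal H P r πE

/-- State visitation probability `d^π_h(s)`, starting from `s1`. -/
noncomputable def dvisit {S A : Type*} [Fintype S] [Fintype A]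
    (P : ℕ → S → A → S → ℝ) (π : ℕ → S → A → ℝ) (s1 : S) : ℕ → S → ℝ
  | 0 => fun s => if s = s1 then 1 else 0
  | h + 1 => fun s' => ∑ s, ∑ a, dvisit P π s1 h s * π h s a * P h s a s'

/-- State-action visitation probability `d^π_h(s, a)`. -/
noncomputable def dvisitSA {S A : Type*} [Fintype S] [Fintype A]
    (P : ℕ → S → A → S → ℝ) (π : ℕ → S → A → ℝ) (s1 : S)
    (h : ℕ) (s : S) (a : A) : ℝ :=
  dvisit P π s1 h s * π h s a

/-- The ground-truth reward mapping `R★` of the IRL problem `(M, πE)`: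
`[R★(V,A)]_h(s,a) = -A_h(s,a)·1{a ∉ supp πE_h(·|s)} + V_h(s) - [P_h V_{h+1}](s,a)`. -/
noncomputable def RStar {S A : Type*} [Fintype S] [Fintype A]
    (P : ℕ → S → A → S → ℝ) (πE : ℕ → S → A → ℝ)
    (V : ℕ → S → ℝ) (Adv : ℕ → S → A → ℝ) : ℕ → S → A → ℝ := fun h s a =>
  -(Adv h s a) * (if πE h s a = 0 then 1 else 0) + V h s -
    ∑ s', P h s a s' * V (h + 1) s'

/-- The parameter class `V̄` of bounded "value functions" (0-based steps; the
bound `H - h` in particular forces `V h = 0` for `h ≥ H`, i.e. `V_{H+1} = 0`). -/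
def Vbar (S : Type*) (H : ℕ) : Set (ℕ → S → ℝ) :=
  {V | ∀ h s, |V h s| ≤ ((H - h : ℕ) : ℝ)}

/-- The parameter class `Ā` of bounded nonnegative "advantage functions". -/
def Abar (S A : Type*) (H : ℕ) : Set (ℕ → S → A → ℝ) :=
  {Adv | ∀ h s a, 0 ≤ Adv h s a ∧ Adv h s a ≤ ((H - h : ℕ) : ℝ)}

/-- Optimal value `V★_1(s1; r)`. -/
noncomputable def Vstar {S A : Type*} [Fintype S] [Fintype A] (H : ℕ)
    (P : ℕ → S → A → S → ℝ) (r : ℕ → S → A → ℝ) (s1 : S) : ℝ :=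
  ⨆ π : {π : ℕ → S → A → ℝ // IsPolicy π}, Vval H P π.1 r 0 s1

/-- The base-metric bound `d^π(r, r') ≤ ε`, stated pointwise over steps `h < H`
(recall `d^π(r,r') = max_{h} E_{s_h ∼ d^π_h} |V^π_h(s_h;r) - V^π_h(s_h;r')|`). -/
def dpiLe {S A : Type*} [Fintype S] [Fintype A] (H : ℕ)
    (P : ℕ → S → A → S → ℝ) (π : ℕ → S → A → ℝ) (s1 : S)
    (r r' : ℕ → S → A → ℝ) (ε : ℝ) : Prop :=
  ∀ h, h < H →
    ∑ s, dvisit P π s1 h s * |Vval H P π r h s - Vval H P π r' h s| ≤ ε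

/-- The expert policy is `Δ`-well-posed. -/
def WellPosed {S A : Type*} (H : ℕ) (πE : ℕ → S → A → ℝ) (Δ : ℝ) : Prop :=
  ∀ h, h < H → ∀ s a, πE h s a ≠ 0 → Δ ≤ πE h s a

/-- `πeval` satisfies `C★` (average-form) single-policy concentrability with
respect to `πb` (with the convention `0/0 = 0`). -/
def Concentrable {S A : Type*} [Fintype S] [Fintype A] (H : ℕ)
    (P : ℕ → S → A → S → ℝ) (πeval πb : ℕ → S → A → ℝ) (s1 : S)
    (Cstar : ℝ) : Prop :=
  (∀ h, h < H → ∀ s a, dvisitSA P πb s1 h s a = 0 → dvisitSA P πeval s1 h s a = 0) ∧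
  (1 / ((H : ℝ) * (Fintype.card S : ℝ))) *
      ∑ h ∈ Finset.range H, ∑ s, ∑ a,
        dvisitSA P πeval s1 h s a / dvisitSA P πb s1 h s a ≤ Cstar

/-- The base metric `d^π(r, r')` as a supremum over steps. -/
noncomputable def dpiSup {S A : Type*} [Fintype S] [Fintype A] (H : ℕ)
    (P : ℕ → S → A → S → ℝ) (π : ℕ → S → A → ℝ) (s1 : S)
    (r r' : ℕ → S → A → ℝ) : ℝ :=
  ⨆ h : Fin H, ∑ s, dvisit P π s1 h s * |Vval H P π r h s - Vval H P π r' h s|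

/-- The metric `D^all_Θ` between two reward mappings: the supremum over all
policies `π` and all parameters `(V, A) ∈ Θ` of `d^π(R(V,A), R'(V,A))`. -/
noncomputable def DallTheta {S A : Type*} [Fintype S] [Fintype A] (H : ℕ)
    (P : ℕ → S → A → S → ℝ) (s1 : S)
    (Θ : Set ((ℕ → S → ℝ) × (ℕ → S → A → ℝ)))
    (R R' : (ℕ → S → ℝ) → (ℕ → S → A → ℝ) → ℕ → S → A → ℝ) : ℝ :=
  ⨆ π : {π : ℕ → S → A → ℝ // IsPolicy π}, ⨆ p : Θ,
    dpiSup H P π.1 s1 (R p.1.1 p.1.2) (R' p.1.1 p.1.2)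

/-- Lindner et al.'s metric `D^L` between two IRL problems
`τ = (M, πE)` and `τ̂ = (M̂, π̂E)` (all Q-values evaluated in `M ∪ r`). -/
noncomputable def DL {S A : Type*} [Fintype S] [Fintype A] (H : ℕ)
    (P Phat : ℕ → S → A → S → ℝ) (πE πEhat : ℕ → S → A → ℝ) (s1 : S) : ℝ :=
  max
    (⨆ r : {r : ℕ → S → A → ℝ // Feasible H P πE r},
      ⨅ rh : {r : ℕ → S → A → ℝ // Feasible H Phat πEhat r},
        ⨆ πs : {π : ℕ → S → A → ℝ // IsPolicy π ∧ IsOptimal H P r.1 π},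
          ⨆ πh : {π : ℕ → S → A → ℝ // IsPolicy π ∧ IsOptimal H Phat rh.1 π},
            ⨆ a : A, |Qval H P πs.1 r.1 0 s1 a - Qval H P πh.1 r.1 0 s1 a|)
    (⨆ rh : {r : ℕ → S → A → ℝ // Feasible H Phat πEhat r},
      ⨅ r : {r : ℕ → S → A → ℝ // Feasible H P πE r},
        ⨆ πs : {π : ℕ → S → A → ℝ // IsPolicy π ∧ IsOptimal H P r.1 π},
          ⨆ πh : {π : ℕ → S → A → ℝ // IsPolicy π ∧ IsOptimal H Phat rh.1 π},
            ⨆ a : A, |Qval H P πs.1 r.1 0 s1 a - Qval H P πh.1 r.1 0 s1 a|)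

/-- Robust form of the bound `D^L(τ, τ̂) ≤ ε`. -/
def DLle {S A : Type*} [Fintype S] [Fintype A] (H : ℕ)
    (P Phat : ℕ → S → A → S → ℝ) (πE πEhat : ℕ → S → A → ℝ) (s1 : S)
    (ε : ℝ) : Prop :=
  (∀ r, Feasible H P πE r → ∃ rh, Feasible H Phat πEhat rh ∧
    ∀ πs, IsPolicy πs → IsOptimal H P r πs →
      ∀ πh, IsPolicy πh → IsOptimal H Phat rh πh →
        ∀ a, |Qval H P πs r 0 s1 a - Qval H P πh r 0 s1 a| ≤ ε) ∧
  (∀ rh, Feasible H Phat πEhat rh → ∃ r, Feasible H P πE r ∧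
    ∀ πs, IsPolicy πs → IsOptimal H P r πs →
      ∀ πh, IsPolicy πh → IsOptimal H Phat rh πh →
        ∀ a, |Qval H P πs r 0 s1 a - Qval H P πh r 0 s1 a| ≤ ε)

/-
Let both problems jump deterministically, whatever the action, to a fixed state: `s₁` in `M`,
`s₂ ≠ s₁` in `M̂`, and let both experts be uniform. Since actions do not influence the dynamics and
the experts have full support, a reward is feasible in either problem iff it does not depend on
the action, and for such rewards every policy has the same Q-values; hence `D^L = 0`.
The ground-truth reward mappings, however, differ at step `h` by `V_{h+1}(s₂) - V_{h+1}(s₁)`, so for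
`V` the indicator of state `s₂` at the second step the two values at `s₁` differ by exactly `1`.
-/

theorem backward_induction (H : ℕ) {p : ℕ → Prop} (base : ∀ h, H ≤ h → p h)
    (step : ∀ h, h < H → p (h + 1) → p h) (h : ℕ) : p h := by
  induction hk : H - h generalizing h with
  | zero => exact base h (by omega)
  | succ k ih => exact step h (by omega) (ih (h + 1) (by omega))

theorem abs_sum_mul_le {ι : Type*} [Fintype ι] {w f : ι → ℝ} {c : ℝ} (hw : ∀ i, 0 ≤ w i)
    (hw₁ : ∑ i, w i = 1) (hf : ∀ i, |f i| ≤ c) : |∑ i, w i * f i| ≤ c :=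
  calc |∑ i, w i * f i| ≤ ∑ i, w i * |f i| := by
        simpa only [abs_mul, abs_of_nonneg (hw _)]
          using Finset.abs_sum_le_sum_abs (fun i => w i * f i) univ
    _ ≤ ∑ i, w i * c := Finset.sum_le_sum fun i _ => mul_le_mul_of_nonneg_left (hf i) (hw i)
    _ = c := by rw [← Finset.sum_mul, hw₁, one_mul]

theorem iSup₃_abs_nonneg {ι κ μ : Sort*} (f : ι → κ → μ → ℝ) : 0 ≤ ⨆ i, ⨆ j, ⨆ k, |f i j k| :=
  Real.iSup_nonneg fun _ => Real.iSup_nonneg fun _ => Real.iSup_nonneg fun _ => abs_nonneg _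

def KernelIgnoresAction {S A : Type*} (P : ℕ → S → A → S → ℝ) : Prop :=
  ∀ h s a a', P h s a = P h s a'

def RewardIgnoresAction {S A : Type*} (H : ℕ) (r : ℕ → S → A → ℝ) : Prop :=
  ∀ h, h < H → ∀ s a a', r h s a = r h s a'

theorem IsKernel.sum_mul_const {S A : Type*} [Fintype S] {P : ℕ → S → A → S → ℝ}
    (hP : IsKernel P) (h : ℕ) (s : S) (a : A) (c : ℝ) : ∑ s', P h s a s' * c = c := by
  rw [← Finset.sum_mul, (hP h s a).2, one_mul]

theorem IsPolicy.sum_mul_const {S A : Type*} [Fintype A] {π : ℕ → S → A → ℝ}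
    (hπ : IsPolicy π) (h : ℕ) (s : S) (c : ℝ) : ∑ a, π h s a * c = c := by
  rw [← Finset.sum_mul, (hπ h s).2, one_mul]

section Values

variable {S A : Type*} [Fintype S] [Fintype A] {H : ℕ} {P : ℕ → S → A → S → ℝ}
  {π : ℕ → S → A → ℝ} {r : ℕ → S → A → ℝ} {h : ℕ}

theorem Vval_of_le (hh : H ≤ h) (s : S) : Vval H P π r h s = 0 := by
  rw [Vval, dif_neg (by omega)]

theorem Qval_of_lt (hh : h < H) (s : S) (a : A) :
    Qval H P π r h s a = r h s a + ∑ s', P h s a s' * Vval H P π r (h + 1) s' :=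
  if_pos hh

theorem Vval_of_lt (hh : h < H) (s : S) :
    Vval H P π r h s = ∑ a, π h s a * Qval H P π r h s a := by
  rw [Vval, dif_pos hh]
  simp only [Qval_of_lt hh]

theorem Vval_eq_add_sum_Ico (hP : IsKernel P) (hπ : IsPolicy π) {r' : ℕ → S → A → ℝ}
    (δ : ℕ → ℝ) (hδ : ∀ h, h < H → ∀ s a, r h s a = r' h s a + δ h) (h : ℕ) (s : S) :
    Vval H P π r h s = Vval H P π r' h s + ∑ k ∈ Ico h H, δ k := by
  induction h using backward_induction H generalizing s with
  | base h hh => simp [Vval_of_le hh, Finset.Ico_eq_empty_of_le hh]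
  | step h hh ih =>
    have hQ : ∀ a, Qval H P π r h s a
        = Qval H P π r' h s a + (δ h + ∑ k ∈ Ico (h + 1) H, δ k) := by
      intro a
      simp only [Qval_of_lt hh, ih, hδ h hh, mul_add, Finset.sum_add_distrib, hP.sum_mul_const]
      ring
    simp only [Vval_of_lt hh, hQ, mul_add, Finset.sum_add_distrib, hπ.sum_mul_const,
      Finset.sum_eq_sum_Ico_succ_bot hh]

theorem abs_Vval_le (hP : IsKernel P) (hπ : IsPolicy π) {B : ℝ} (hB : 0 ≤ B)
    (hr : ∀ h, h < H → ∀ s a, |r h s a| ≤ B) (h : ℕ) (s : S) :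
    |Vval H P π r h s| ≤ (H - h : ℕ) * B := by
  induction h using backward_induction H generalizing s with
  | base h hh => simp only [Vval_of_le hh, abs_zero]; positivity
  | step h hh ih =>
    have hH : ((H - h : ℕ) : ℝ) * B = B + ((H - (h + 1) : ℕ) : ℝ) * B := by
      rw [show H - h = H - (h + 1) + 1 by omega]; push_cast; ring
    rw [Vval_of_lt hh, hH]
    refine abs_sum_mul_le (hπ h s).1 (hπ h s).2 fun a => ?_
    rw [Qval_of_lt hh]
    exact (abs_add_le _ _).trans
      (add_le_add (hr h hh s a) (abs_sum_mul_le (hP h s a).1 (hP h s a).2 ih))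

theorem Qval_eq_Vval_of_isOptimal (hπ : IsPolicy π) (hopt : IsOptimal H P r π) (hh : h < H)
    {s : S} (hpos : ∀ a, 0 < π h s a) (a : A) : Qval H P π r h s a = Vval H P π r h s := by
  have hsum : ∑ b, π h s b * (Vval H P π r h s - Qval H P π r h s b) = 0 := by
    simp only [mul_sub, Finset.sum_sub_distrib, hπ.sum_mul_const, ← Vval_of_lt hh, sub_self]
  have hterm := (Finset.sum_eq_zero_iff_of_nonneg fun b _ =>
    mul_nonneg ((hπ h s).1 b) (sub_nonneg.2 (hopt h hh s b))).1 hsum a (mem_univ a)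
  linarith [(mul_eq_zero.1 hterm).resolve_left (hpos a).ne']

theorem Qval_sub_reward_eq (hP : KernelIgnoresAction P) (hh : h < H) (s : S) (a a' : A) :
    Qval H P π r h s a - r h s a = Qval H P π r h s a' - r h s a' := by
  simp only [Qval_of_lt hh, hP h s a a', add_sub_cancel_left]

theorem Vval_eq_Qval_of_ignoresAction (hP : KernelIgnoresAction P) (hr : RewardIgnoresAction H r)
    (hπ : IsPolicy π) (hh : h < H) (s : S) (a : A) : Vval H P π r h s = Qval H P π r h s a := by
  rw [Vval_of_lt hh, ← hπ.sum_mul_const h s (Qval H P π r h s a)]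
  refine Finset.sum_congr rfl fun b _ => congrArg _ ?_
  linarith [Qval_sub_reward_eq (π := π) (r := r) hP hh s b a, hr h hh s b a]

theorem Vval_policy_indep (hP : KernelIgnoresAction P) (hr : RewardIgnoresAction H r)
    {π' : ℕ → S → A → ℝ} (hπ : IsPolicy π) (hπ' : IsPolicy π') (h : ℕ) (s : S) :
    Vval H P π r h s = Vval H P π' r h s := by
  induction h using backward_induction H generalizing s with
  | base h hh => rw [Vval_of_le hh, Vval_of_le hh]
  | step h hh ih =>
    have hQ : ∀ a, Qval H P π r h s a = Vval H P π' r h s := fun a => by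
      rw [Vval_eq_Qval_of_ignoresAction hP hr hπ' hh s a, Qval_of_lt hh, Qval_of_lt hh]
      simp only [ih]
    simp only [Vval_of_lt hh, hQ, hπ.sum_mul_const]

theorem Qval_policy_indep (hP : KernelIgnoresAction P) (hr : RewardIgnoresAction H r)
    {π' : ℕ → S → A → ℝ} (hπ : IsPolicy π) (hπ' : IsPolicy π') (h : ℕ) (s : S) (a : A) :
    Qval H P π r h s a = Qval H P π' r h s a := by
  simp only [Qval, Vval_policy_indep hP hr hπ hπ']

theorem feasible_iff_rewardIgnoresAction (hP : KernelIgnoresAction P) (hπ : IsPolicy π)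
    (hpos : ∀ h s a, 0 < π h s a) : Feasible H P π r ↔ RewardIgnoresAction H r := by
  refine ⟨fun hopt h hh s a a' => ?_,
    fun hr h hh s a => (Vval_eq_Qval_of_ignoresAction hP hr hπ hh s a).ge⟩
  linarith [Qval_sub_reward_eq (π := π) (r := r) hP hh s a a',
    Qval_eq_Vval_of_isOptimal hπ hopt hh (hpos h s) a,
    Qval_eq_Vval_of_isOptimal hπ hopt hh (hpos h s) a']

end Values

theorem DL_eq_zero_of_feasible_iff {S A : Type*} [Fintype S] [Fintype A] {H : ℕ}
    {P Phat : ℕ → S → A → S → ℝ} {πE πEhat : ℕ → S → A → ℝ} {s1 : S}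
    (hfeas : ∀ r, Feasible H P πE r ↔ Feasible H Phat πEhat r)
    (hQ : ∀ r, Feasible H P πE r → ∀ π π', IsPolicy π → IsPolicy π' →
      ∀ a, Qval H P π r 0 s1 a = Qval H P π' r 0 s1 a) :
    DL H P Phat πE πEhat s1 = 0 := by
  have hzero : ∀ r, Feasible H P πE r → ∀ {ι κ : Sort _} (πs : ι → ℕ → S → A → ℝ)
      (πh : κ → ℕ → S → A → ℝ), (∀ i, IsPolicy (πs i)) → (∀ j, IsPolicy (πh j)) →
      ⨆ i, ⨆ j, ⨆ a, |Qval H P (πs i) r 0 s1 a - Qval H P (πh j) r 0 s1 a| = 0 := by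
    intro r hr ι κ πs πh hs hh
    have hQr : ∀ i j a, |Qval H P (πs i) r 0 s1 a - Qval H P (πh j) r 0 s1 a| = 0 :=
      fun i j a => by rw [hQ r hr _ _ (hs i) (hh j) a, sub_self, abs_zero]
    simp only [hQr, Real.iSup_const_zero]
  refine le_antisymm (max_le ?_ ?_) (le_max_of_le_left
    (Real.iSup_nonneg fun _ => Real.iInf_nonneg fun _ => iSup₃_abs_nonneg _))
  · refine Real.iSup_le (fun r => ciInf_le_of_le ⟨0, ?_⟩ ⟨r.1, (hfeas r.1).1 r.2⟩
      (hzero r.1 r.2 _ _ (fun i => i.2.1) (fun j => j.2.1)).le) le_rfl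
    rintro _ ⟨_, rfl⟩
    exact iSup₃_abs_nonneg _
  · refine Real.iSup_le (fun rh => ciInf_le_of_le ⟨0, ?_⟩ ⟨rh.1, (hfeas rh.1).2 rh.2⟩
      (hzero rh.1 ((hfeas rh.1).2 rh.2) _ _ (fun i => i.2.1) (fun j => j.2.1)).le) le_rfl
    rintro _ ⟨_, rfl⟩
    exact iSup₃_abs_nonneg _

theorem DL_eq_zero_of_kernelIgnoresAction {S A : Type*} [Fintype S] [Fintype A] {H : ℕ}
    {P Phat : ℕ → S → A → S → ℝ} {πE πEhat : ℕ → S → A → ℝ} (s1 : S)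
    (hP : KernelIgnoresAction P) (hPhat : KernelIgnoresAction Phat)
    (hπE : IsPolicy πE) (hπEhat : IsPolicy πEhat)
    (hposE : ∀ h s a, 0 < πE h s a) (hposEhat : ∀ h s a, 0 < πEhat h s a) :
    DL H P Phat πE πEhat s1 = 0 := by
  refine DL_eq_zero_of_feasible_iff (fun r => ?_) fun r hr π π' hπ hπ' a => ?_
  · rw [feasible_iff_rewardIgnoresAction hP hπE hposE,
      feasible_iff_rewardIgnoresAction hPhat hπEhat hposEhat]
  · exact Qval_policy_indep hP ((feasible_iff_rewardIgnoresAction hP hπE hposE).1 hr)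
      hπ hπ' 0 s1 a

section Visitation

variable {S A : Type*} [Fintype S] [Fintype A] {P : ℕ → S → A → S → ℝ} {π : ℕ → S → A → ℝ}

theorem dvisit_nonneg (hP : IsKernel P) (hπ : IsPolicy π) (s1 : S) (h : ℕ) (s : S) :
    0 ≤ dvisit P π s1 h s := by
  induction h generalizing s with
  | zero => simp only [dvisit]; positivity
  | succ h ih =>
    exact Finset.sum_nonneg fun s _ => Finset.sum_nonneg fun a _ =>
      mul_nonneg (mul_nonneg (ih s) ((hπ h s).1 a)) ((hP h s a).1 _)

theorem sum_dvisit_eq_one (hP : IsKernel P) (hπ : IsPolicy π) (s1 : S) (h : ℕ) :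
    ∑ s, dvisit P π s1 h s = 1 := by
  induction h with
  | zero => simp [dvisit]
  | succ h ih =>
    calc ∑ s', dvisit P π s1 (h + 1) s'
        = ∑ s, ∑ a, dvisit P π s1 h s * π h s a * ∑ s', P h s a s' := by
          simp only [dvisit, Finset.mul_sum]
          rw [Finset.sum_comm]
          exact Finset.sum_congr rfl fun s _ => Finset.sum_comm
      _ = 1 := by simp only [(hP _ _ _).2, mul_one, ← Finset.mul_sum, (hπ _ _).2, ih]

theorem abs_Vval_sub_le_dpiSup {H : ℕ} (hH : 0 < H) (s1 : S) (r r' : ℕ → S → A → ℝ) :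
    |Vval H P π r 0 s1 - Vval H P π r' 0 s1| ≤ dpiSup H P π s1 r r' := by
  refine le_of_eq_of_le ?_ (le_ciSup (Set.finite_range _).bddAbove (⟨0, hH⟩ : Fin H))
  simp [dvisit]

theorem dpiSup_le {H : ℕ} (hP : IsKernel P) (hπ : IsPolicy π) (s1 : S)
    {r r' : ℕ → S → A → ℝ} {B : ℝ} (hB : 0 ≤ B) (hr : ∀ h, h < H → ∀ s a, |r h s a| ≤ B)
    (hr' : ∀ h, h < H → ∀ s a, |r' h s a| ≤ B) : dpiSup H P π s1 r r' ≤ 2 * (H * B) := by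
  have hV : ∀ {r : ℕ → S → A → ℝ}, (∀ h, h < H → ∀ s a, |r h s a| ≤ B) →
      ∀ h s, |Vval H P π r h s| ≤ H * B := fun hr h s =>
    (abs_Vval_le hP hπ hB hr h s).trans
      (mul_le_mul_of_nonneg_right (Nat.cast_le.2 (Nat.sub_le H h)) hB)
  refine Real.iSup_le (fun k => (le_abs_self _).trans ?_) (by positivity)
  refine abs_sum_mul_le (dvisit_nonneg hP hπ s1 k) (sum_dvisit_eq_one hP hπ s1 k) fun s => ?_
  rw [abs_abs, two_mul]
  exact (abs_sub _ _).trans (add_le_add (hV hr k s) (hV hr' k s))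

end Visitation

theorem dpiSup_le_DallTheta {S A : Type*} [Fintype S] [Fintype A] {H : ℕ}
    {P : ℕ → S → A → S → ℝ} {s1 : S} {Θ : Set ((ℕ → S → ℝ) × (ℕ → S → A → ℝ))}
    {R R' : (ℕ → S → ℝ) → (ℕ → S → A → ℝ) → ℕ → S → A → ℝ} {C : ℝ}
    (hC : ∀ π, IsPolicy π → ∀ p ∈ Θ, dpiSup H P π s1 (R p.1 p.2) (R' p.1 p.2) ≤ C)
    {π : ℕ → S → A → ℝ} (hπ : IsPolicy π) {p : (ℕ → S → ℝ) × (ℕ → S → A → ℝ)} (hp : p ∈ Θ) :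
    dpiSup H P π s1 (R p.1 p.2) (R' p.1 p.2) ≤ DallTheta H P s1 Θ R R' := by
  -- `⨆` over `ℝ` is junk (`0`) on families unbounded above, hence the uniform bound `C`.
  have : Nonempty Θ := ⟨⟨p, hp⟩⟩
  refine le_trans ?_ (le_ciSup (f := fun π' : {π // IsPolicy π} =>
    ⨆ q : Θ, dpiSup H P π'.1 s1 (R q.1.1 q.1.2) (R' q.1.1 q.1.2)) ⟨C, ?_⟩ ⟨π, hπ⟩)
  · refine le_ciSup (f := fun q : Θ => dpiSup H P π s1 (R q.1.1 q.1.2) (R' q.1.1 q.1.2))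
      ⟨C, ?_⟩ ⟨p, hp⟩
    rintro _ ⟨q, rfl⟩
    exact hC π hπ q.1 q.2
  · rintro _ ⟨π', rfl⟩
    exact ciSup_le fun q => hC π'.1 π'.2 q.1 q.2

theorem abs_RStar_le {S A : Type*} [Fintype S] [Fintype A] {H : ℕ} {P : ℕ → S → A → S → ℝ}
    (hP : IsKernel P) (πE : ℕ → S → A → ℝ) {V : ℕ → S → ℝ} {Adv : ℕ → S → A → ℝ}
    (hV : V ∈ Vbar S H) (hA : Adv ∈ Abar S A H) (h : ℕ) (s : S) (a : A) :
    |RStar P πE V Adv h s a| ≤ 3 * H := by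
  have hVH : ∀ k s, |V k s| ≤ H := fun k s => (hV k s).trans (Nat.cast_le.2 (Nat.sub_le H k))
  have hAH : |Adv h s a * (if πE h s a = 0 then 1 else 0)| ≤ H := by
    have hA' : |Adv h s a| ≤ H := (abs_of_nonneg (hA h s a).1).trans_le
      ((hA h s a).2.trans (Nat.cast_le.2 (Nat.sub_le H h)))
    split_ifs <;> simp [hA']
  have hPV := abs_sum_mul_le (hP h s a).1 (hP h s a).2 (hVH (h + 1))
  calc |RStar P πE V Adv h s a|
      ≤ |-Adv h s a * (if πE h s a = 0 then 1 else 0)| + |V h s|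
        + |∑ s', P h s a s' * V (h + 1) s'| :=
        (abs_sub _ _).trans (add_le_add_left (abs_add_le _ _) _)
    _ ≤ 3 * H := by rw [neg_mul, abs_neg]; linarith [hVH h s]

section Witness

noncomputable def diracKernel {S : Type*} (A : Type*) (t : S) : ℕ → S → A → S → ℝ :=
  fun _ _ _ s' => if s' = t then 1 else 0

noncomputable def uniformPolicy (A : Type*) [Fintype A] (S : Type*) : ℕ → S → A → ℝ :=
  fun _ _ _ => (Fintype.card A : ℝ)⁻¹

variable {S A : Type*}

theorem isKernel_diracKernel [Fintype S] (t : S) : IsKernel (diracKernel A t) :=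
  fun _ _ _ => ⟨fun _ => by unfold diracKernel; split_ifs <;> norm_num, by simp [diracKernel]⟩

theorem kernelIgnoresAction_diracKernel (t : S) : KernelIgnoresAction (diracKernel A t) :=
  fun _ _ _ _ => rfl

theorem uniformPolicy_pos [Fintype A] [Nonempty A] (h : ℕ) (s : S) (a : A) :
    0 < uniformPolicy A S h s a := by
  unfold uniformPolicy; positivity

theorem isPolicy_uniformPolicy [Fintype A] [Nonempty A] : IsPolicy (uniformPolicy A S) :=
  fun h s => ⟨fun a => (uniformPolicy_pos h s a).le, by simp [uniformPolicy]⟩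

theorem RStar_diracKernel [Fintype S] [Fintype A] (t t' : S) (πE : ℕ → S → A → ℝ)
    (V : ℕ → S → ℝ) (Adv : ℕ → S → A → ℝ) (h : ℕ) (s : S) (a : A) :
    RStar (diracKernel A t) πE V Adv h s a
      = RStar (diracKernel A t') πE V Adv h s a + (V (h + 1) t' - V (h + 1) t) := by
  simp only [RStar, diracKernel, ite_mul, one_mul, zero_mul, Finset.sum_ite_eq', mem_univ,
    if_true]
  ring

theorem one_le_DallTheta_diracKernel [Fintype S] [Fintype A] [Nonempty A] {H : ℕ} (hH : 2 ≤ H)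
    {s1 s2 : S} (hne : s1 ≠ s2) :
    1 ≤ DallTheta H (diracKernel A s1) s1 (Vbar S H ×ˢ Abar S A H)
      (RStar (diracKernel A s1) (uniformPolicy A S))
      (RStar (diracKernel A s2) (uniformPolicy A S)) := by
  set V : ℕ → S → ℝ := fun h s => if h = 1 ∧ s = s2 then 1 else 0
  have hV : V ∈ Vbar S H := fun h s => by
    simp only [V]
    split_ifs with h1
    · rw [h1.1, abs_one]
      exact_mod_cast (by omega : 1 ≤ H - 1)
    · simp
  have hA : (0 : ℕ → S → A → ℝ) ∈ Abar S A H := fun _ _ _ => ⟨le_rfl, Nat.cast_nonneg _⟩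
  have hgap : Vval H (diracKernel A s1) (uniformPolicy A S)
        (RStar (diracKernel A s1) (uniformPolicy A S) V 0) 0 s1
      = Vval H (diracKernel A s1) (uniformPolicy A S)
        (RStar (diracKernel A s2) (uniformPolicy A S) V 0) 0 s1 + 1 := by
    rw [Vval_eq_add_sum_Ico (isKernel_diracKernel s1) isPolicy_uniformPolicy _
      fun h _ s a => RStar_diracKernel s1 s2 _ V 0 h s a]
    simp [V, hne, show 0 < H by omega]
  have hC : ∀ π, IsPolicy π → ∀ p ∈ Vbar S H ×ˢ Abar S A H,
      dpiSup H (diracKernel A s1) π s1 (RStar (diracKernel A s1) (uniformPolicy A S) p.1 p.2)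
        (RStar (diracKernel A s2) (uniformPolicy A S) p.1 p.2) ≤ 2 * (H * (3 * H)) :=
    fun π hπ p hp => dpiSup_le (isKernel_diracKernel s1) hπ s1 (by positivity)
      (fun h _ s a => abs_RStar_le (isKernel_diracKernel s1) _ hp.1 hp.2 h s a)
      (fun h _ s a => abs_RStar_le (isKernel_diracKernel s2) _ hp.1 hp.2 h s a)
  calc (1 : ℝ)
      = |Vval H (diracKernel A s1) (uniformPolicy A S)
          (RStar (diracKernel A s1) (uniformPolicy A S) V 0) 0 s1
        - Vval H (diracKernel A s1) (uniformPolicy A S)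
          (RStar (diracKernel A s2) (uniformPolicy A S) V 0) 0 s1| := by
        rw [hgap, add_sub_cancel_left, abs_one]
    _ ≤ _ := abs_Vval_sub_le_dpiSup (by omega) s1 _ _
    _ ≤ _ := dpiSup_le_DallTheta hC isPolicy_uniformPolicy (p := (V, 0)) ⟨hV, hA⟩

end Witness

/-- with `Θ = V̄ × Ā`, there are two IRL problems which are
indistinguishable under `D^L` (distance `0`) but whose induced ground-truth
reward mappings are at `D^all_Θ`-distance at least `1`. -/
theorem DL_cannot_distinguish {S A : Type*} [Fintype S] [Fintype A] [Nonempty A]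
    (H : ℕ) (hS : 2 ≤ Fintype.card S) (hH : 2 ≤ H) :
    ∃ (P Phat : ℕ → S → A → S → ℝ) (πE πEhat : ℕ → S → A → ℝ) (s1 : S),
      IsKernel P ∧ IsKernel Phat ∧ IsPolicy πE ∧ IsPolicy πEhat ∧
      DL H P Phat πE πEhat s1 = 0 ∧
      1 ≤ DallTheta H P s1 (Vbar S H ×ˢ Abar S A H)
            (RStar P πE) (RStar Phat πEhat) := by
  obtain ⟨s1, s2, hne⟩ := Fintype.exists_pair_of_one_lt_card (by omega : 1 < Fintype.card S)
  exact ⟨diracKernel A s1, diracKernel A s2, uniformPolicy A S, uniformPolicy A S, s1,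
    isKernel_diracKernel s1, isKernel_diracKernel s2, isPolicy_uniformPolicy,
    isPolicy_uniformPolicy,
    DL_eq_zero_of_kernelIgnoresAction s1 (kernelIgnoresAction_diracKernel s1)
      (kernelIgnoresAction_diracKernel s2) isPolicy_uniformPolicy isPolicy_uniformPolicy
      uniformPolicy_pos uniformPolicy_pos,
    one_le_DallTheta_diracKernel hH hne⟩

end IRL
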